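/- arXiv:2207.12973 — 2 statements merged into one kernel-verified Lean document; each statement's English description precedes it below -/
import Mathlib

section
/- For every 0 < p < 1, the discrete Laguerre functions are orthonormal in ℓ²(ℕ,ℝ): for all j, k ∈ ℕ the series Σ_{t=0}^∞ ℓ_j(t;p)·ℓ_k(t;p) converges and equals 1 if j = k and 0 if j ≠ k. -/
/-- The discrete Laguerre functions `ℓ_j(t; p)` in time-domain, defined recursively:
`ℓ_0(t) = √(1-p)·(√p)^t`, `ℓ_{j+1}(0) = -√p·ℓ_j(0)`,
`ℓ_{j+1}(t+1) = √p·ℓ_{j+1}(t) + ℓ_j(t) - √p·ℓ_j(t+1)`. -/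
noncomputable def discreteLaguerre (p : ℝ) : ℕ → ℕ → ℝ
  | 0, t => Real.sqrt (1 - p) * Real.sqrt p ^ t
  | j + 1, 0 => -Real.sqrt p * discreteLaguerre p j 0
  | j + 1, t + 1 =>
      Real.sqrt p * discreteLaguerre p (j + 1) t + discreteLaguerre p j t
        - Real.sqrt p * discreteLaguerre p j (t + 1)
  termination_by j t => (j, t)

/-!
The map `ℓ_j ↦ ℓ_{j+1}` is the all-pass filter `(1 - √p z)/(z - √p)`. Realised with the state
`x_j(t+1) = √p x_j(t) + √(1-p) ℓ_j(t)`, `x_j(0) = 0`, its output is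
`ℓ_{j+1}(t) = √(1-p) x_j(t) - √p ℓ_j(t)`, so one time step maps `(x_j(t), ℓ_j(t))` to
`(x_j(t+1), ℓ_{j+1}(t))` by an orthogonal matrix. Hence
`x_j(t+1) x_k(t+1) + ℓ_{j+1}(t) ℓ_{k+1}(t) = x_j(t) x_k(t) + ℓ_j(t) ℓ_k(t)`, and summing over `t`
gives `⟨ℓ_{j+1}, ℓ_{k+1}⟩ = ⟨ℓ_j, ℓ_k⟩` once the states vanish at infinity. For the
first row, `ℓ_0(t) ℓ_{k+1}(t) = √p^t x_k(t) - √p^(t+1) x_k(t+1)` telescopes to `0`, and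
`⟨ℓ_0, ℓ_0⟩ = 1` is a geometric series.
-/

open Filter Topology Finset

theorem sq_sqrt_add_sq_sqrt_one_sub {p : ℝ} (hp0 : 0 ≤ p) (hp1 : p ≤ 1) :
    √p ^ 2 + √(1 - p) ^ 2 = 1 := by
  rw [Real.sq_sqrt hp0, Real.sq_sqrt (by linarith)]
  ring

theorem tendsto_zero_of_summable_sq {x : ℕ → ℝ} (hx : Summable fun n => x n ^ 2) :
    Tendsto x atTop (𝓝 0) := by
  have h := hx.tendsto_atTop_zero.sqrt
  simp only [Real.sqrt_sq_eq_abs, Real.sqrt_zero] at h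
  exact (tendsto_zero_iff_abs_tendsto_zero x).mpr h

theorem summable_mul_of_summable_sq {f g : ℕ → ℝ} (hf : Summable fun n => f n ^ 2)
    (hg : Summable fun n => g n ^ 2) : Summable fun n => f n * g n :=
  Summable.of_norm_bounded (hf.add hg) fun n => by
    rw [Real.norm_eq_abs, abs_mul]
    nlinarith [two_mul_le_add_sq |f n| |g n|, sq_abs (f n), sq_abs (g n), abs_nonneg (f n),
      abs_nonneg (g n)]

/-- If `|x|` converges, passing to the limit in `|x (t+1)| ≤ a |x t| + |u t|` forces the
limit `L` to satisfy `L ≤ a L`, hence `L = 0`. -/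
theorem tendsto_zero_of_tendsto_sq_of_abs_succ_le {x u : ℕ → ℝ} {a d : ℝ} (ha : a < 1)
    (hx : Tendsto (fun n => x n ^ 2) atTop (𝓝 d)) (hu : Tendsto u atTop (𝓝 0))
    (hrec : ∀ t, |x (t + 1)| ≤ a * |x t| + |u t|) : Tendsto x atTop (𝓝 0) := by
  have habs : Tendsto (fun n => |x n|) atTop (𝓝 √d) := by
    simpa only [Real.sqrt_sq_eq_abs] using hx.sqrt
  have hle : √d ≤ a * √d := by
    refine le_of_tendsto_of_tendsto' (habs.comp (tendsto_add_atTop_nat 1)) ?_ hrec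
    simpa using (habs.const_mul a).add hu.abs
  have hd : √d = 0 := by nlinarith [Real.sqrt_nonneg d]
  rw [hd] at habs
  exact (tendsto_zero_iff_abs_tendsto_zero x).mpr habs

noncomputable def discreteLaguerreState (p : ℝ) (j : ℕ) : ℕ → ℝ
  | 0 => 0
  | t + 1 => √p * discreteLaguerreState p j t + √(1 - p) * discreteLaguerre p j t

theorem discreteLaguerre_zero_left (p : ℝ) (t : ℕ) :
    discreteLaguerre p 0 t = √(1 - p) * √p ^ t := by
  rw [discreteLaguerre]

theorem discreteLaguerre_succ_eq {p : ℝ} (hp0 : 0 ≤ p) (hp1 : p ≤ 1) (j t : ℕ) :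
    discreteLaguerre p (j + 1) t =
      √(1 - p) * discreteLaguerreState p j t - √p * discreteLaguerre p j t := by
  induction t with
  | zero => simp [discreteLaguerre, discreteLaguerreState]
  | succ t ih =>
    rw [discreteLaguerre, ih, discreteLaguerreState]
    linear_combination (-discreteLaguerre p j t) * sq_sqrt_add_sq_sqrt_one_sub hp0 hp1

theorem discreteLaguerreState_succ_mul_add {p : ℝ} (hp0 : 0 ≤ p) (hp1 : p ≤ 1) (j k t : ℕ) :
    discreteLaguerreState p j (t + 1) * discreteLaguerreState p k (t + 1)
        + discreteLaguerre p (j + 1) t * discreteLaguerre p (k + 1) t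
      = discreteLaguerreState p j t * discreteLaguerreState p k t
        + discreteLaguerre p j t * discreteLaguerre p k t := by
  rw [discreteLaguerreState, discreteLaguerreState, discreteLaguerre_succ_eq hp0 hp1,
    discreteLaguerre_succ_eq hp0 hp1]
  linear_combination (discreteLaguerreState p j t * discreteLaguerreState p k t
    + discreteLaguerre p j t * discreteLaguerre p k t) * sq_sqrt_add_sq_sqrt_one_sub hp0 hp1

theorem discreteLaguerreState_mul_add_sum_range {p : ℝ} (hp0 : 0 ≤ p) (hp1 : p ≤ 1)
    (j k n : ℕ) :
    discreteLaguerreState p j n * discreteLaguerreState p k n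
        + ∑ t ∈ range n, discreteLaguerre p (j + 1) t * discreteLaguerre p (k + 1) t
      = ∑ t ∈ range n, discreteLaguerre p j t * discreteLaguerre p k t := by
  induction n with
  | zero => simp [discreteLaguerreState]
  | succ n ih =>
    rw [sum_range_succ, sum_range_succ, ← ih]
    linear_combination discreteLaguerreState_succ_mul_add hp0 hp1 j k n

theorem hasSum_discreteLaguerre_zero_sq {p : ℝ} (hp0 : 0 ≤ p) (hp1 : p < 1) :
    HasSum (fun t => discreteLaguerre p 0 t ^ 2) 1 := by
  have hsq (t : ℕ) : discreteLaguerre p 0 t ^ 2 = (1 - p) * p ^ t := by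
    rw [discreteLaguerre_zero_left, mul_pow, ← pow_mul, mul_comm t, pow_mul,
      Real.sq_sqrt hp0, Real.sq_sqrt (by linarith)]
  simpa only [hsq, mul_inv_cancel₀ (sub_ne_zero.mpr hp1.ne')] using
    (hasSum_geometric_of_lt_one hp0 hp1).mul_left (1 - p)

theorem summable_discreteLaguerre_sq {p : ℝ} (hp0 : 0 ≤ p) (hp1 : p < 1) (j : ℕ) :
    Summable fun t => discreteLaguerre p j t ^ 2 := by
  induction j with
  | zero => exact (hasSum_discreteLaguerre_zero_sq hp0 hp1).summable
  | succ j ih =>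
    refine summable_of_sum_range_le (c := ∑' t, discreteLaguerre p j t ^ 2)
      (fun t => sq_nonneg _) fun n => ?_
    have hsum := discreteLaguerreState_mul_add_sum_range hp0 hp1.le j j n
    simp only [← sq] at hsum
    linarith [sq_nonneg (discreteLaguerreState p j n),
      ih.sum_le_tsum (range n) fun t _ => sq_nonneg (discreteLaguerre p j t)]

theorem summable_discreteLaguerre_mul {p : ℝ} (hp0 : 0 ≤ p) (hp1 : p < 1) (j k : ℕ) :
    Summable fun t => discreteLaguerre p j t * discreteLaguerre p k t :=
  summable_mul_of_summable_sq (summable_discreteLaguerre_sq hp0 hp1 j)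
    (summable_discreteLaguerre_sq hp0 hp1 k)

theorem tendsto_discreteLaguerreState {p : ℝ} (hp0 : 0 ≤ p) (hp1 : p < 1) (j : ℕ) :
    Tendsto (discreteLaguerreState p j) atTop (𝓝 0) := by
  have hsq (n : ℕ) : discreteLaguerreState p j n ^ 2
      = ∑ t ∈ range n, discreteLaguerre p j t ^ 2
        - ∑ t ∈ range n, discreteLaguerre p (j + 1) t ^ 2 := by
    simp only [sq]
    linarith [discreteLaguerreState_mul_add_sum_range hp0 hp1.le j j n]
  refine tendsto_zero_of_tendsto_sq_of_abs_succ_le (a := √p)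
    (d := ∑' t, discreteLaguerre p j t ^ 2 - ∑' t, discreteLaguerre p (j + 1) t ^ 2)
    (u := fun t => √(1 - p) * discreteLaguerre p j t) ?_ ?_ ?_ ?_
  · exact (Real.sqrt_lt' one_pos).mpr (by rwa [one_pow])
  · simp only [hsq]
    exact (summable_discreteLaguerre_sq hp0 hp1 j).hasSum.tendsto_sum_nat.sub
      (summable_discreteLaguerre_sq hp0 hp1 (j + 1)).hasSum.tendsto_sum_nat
  · simpa using
      (tendsto_zero_of_summable_sq (summable_discreteLaguerre_sq hp0 hp1 j)).const_mul √(1 - p)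
  · intro t
    rw [discreteLaguerreState]
    refine (abs_add_le _ _).trans_eq ?_
    rw [abs_mul, abs_of_nonneg (Real.sqrt_nonneg p)]

theorem hasSum_discreteLaguerre_succ_mul_succ {p : ℝ} (hp0 : 0 ≤ p) (hp1 : p < 1) {j k : ℕ}
    {S : ℝ} (h : HasSum (fun t => discreteLaguerre p j t * discreteLaguerre p k t) S) :
    HasSum (fun t => discreteLaguerre p (j + 1) t * discreteLaguerre p (k + 1) t) S := by
  rw [(summable_discreteLaguerre_mul hp0 hp1 _ _).hasSum_iff_tendsto_nat]
  have hstate := (tendsto_discreteLaguerreState hp0 hp1 j).mul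
    (tendsto_discreteLaguerreState hp0 hp1 k)
  rw [mul_zero] at hstate
  simpa [← discreteLaguerreState_mul_add_sum_range hp0 hp1.le j k] using
    h.tendsto_sum_nat.sub hstate

theorem hasSum_discreteLaguerre_zero_mul_succ {p : ℝ} (hp0 : 0 ≤ p) (hp1 : p < 1) (k : ℕ) :
    HasSum (fun t => discreteLaguerre p 0 t * discreteLaguerre p (k + 1) t) 0 := by
  have htelescope (t : ℕ) : discreteLaguerre p 0 t * discreteLaguerre p (k + 1) t
      = √p ^ t * discreteLaguerreState p k t
        - √p ^ (t + 1) * discreteLaguerreState p k (t + 1) := by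
    rw [discreteLaguerre_zero_left, discreteLaguerre_succ_eq hp0 hp1.le, discreteLaguerreState]
    linear_combination (√p ^ t * discreteLaguerreState p k t)
      * sq_sqrt_add_sq_sqrt_one_sub hp0 hp1.le
  have hpartial (n : ℕ) : ∑ t ∈ range n, discreteLaguerre p 0 t * discreteLaguerre p (k + 1) t
      = -(√p ^ n * discreteLaguerreState p k n) := by
    rw [sum_congr rfl fun t _ => htelescope t,
      sum_range_sub' (fun t => √p ^ t * discreteLaguerreState p k t)]
    simp [discreteLaguerreState]
  have hsqrt : √p < 1 := (Real.sqrt_lt' one_pos).mpr (by rwa [one_pow])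
  rw [(summable_discreteLaguerre_mul hp0 hp1 _ _).hasSum_iff_tendsto_nat]
  simpa [hpartial] using
    ((tendsto_pow_atTop_nhds_zero_of_lt_one (Real.sqrt_nonneg p) hsqrt).mul
      (tendsto_discreteLaguerreState hp0 hp1 k)).neg

/-- Orthonormality of the discrete Laguerre functions in `ℓ²(ℕ, ℝ)`. -/
theorem discreteLaguerre_orthonormal (p : ℝ) (hp0 : 0 < p) (hp1 : p < 1) (j k : ℕ) :
    HasSum (fun t : ℕ => discreteLaguerre p j t * discreteLaguerre p k t)
      (if j = k then (1 : ℝ) else 0) := by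
  induction j generalizing k with
  | zero =>
    cases k with
    | zero => simpa [sq] using hasSum_discreteLaguerre_zero_sq hp0.le hp1
    | succ k => simpa using hasSum_discreteLaguerre_zero_mul_succ hp0.le hp1 k
  | succ j ih =>
    cases k with
    | zero => simpa [mul_comm] using hasSum_discreteLaguerre_zero_mul_succ hp0.le hp1 j
    | succ k => simpa using hasSum_discreteLaguerre_succ_mul_succ hp0.le hp1 (ih k)
end

section
/- Let 0 < p < 1 and τ ∈ ℕ with τ ≥ 1. Define the Markov parameters of the delay in Laguerre-domain by h_0 = (√p)^τ and h_m = (1−p)·L^{(τ)}_m(√p) for m ≥ 1, and set α = √p + 1/√p, β = √p − 1/√p. Then for every m ≥ 1, (m+1)·h_{m+1} + (m·α + τ·β)·h_m + (m−1)·h_{m−1} = 0; consequently, for every m ≥ 1 with h_m ≠ 0, τ = −((m+1)·h_{m+1} + (m−1)·h_{m−1})/(β·h_m) − m·α/β. -/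
/-- The polynomial factor `L_m^{(τ)}(√p)` in the Laguerre-domain delay description. -/
noncomputable def delayLaguerrePoly (p : ℝ) (τ m : ℕ) : ℝ :=
  (-Real.sqrt p) ^ ((m : ℤ) - (τ : ℤ)) *
    ∑ n ∈ Finset.range τ,
      ((m + n).choose n : ℝ) * ((m - 1).choose (τ - n - 1) : ℝ) * (-p) ^ n

/-- The Markov parameters of the `τ`-step delay in Laguerre-domain:
`h_0 = (√p)^τ` and `h_m = (1−p)·L_m^{(τ)}(√p)` for `m ≥ 1`. -/
noncomputable def delayMarkov (p : ℝ) (τ : ℕ) (m : ℕ) : ℝ :=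
  if m = 0 then Real.sqrt p ^ τ else (1 - p) * delayLaguerrePoly p τ m

/-!
Write `L_m = (-√p)^(m-τ) · S_m(-p)` with `S_m(x) = ∑_{n<τ} C(m+n,n) C(m-1,τ-n-1) xⁿ`. After
dividing by the common power of `-√p`, the recurrence becomes a polynomial identity in `x` which
telescopes: with suitable coefficients `u n, v n` the left side is `∑ (u n x^(n+1) - v n xⁿ)`,
where `v 0 = 0`, `u (τ-1) = 0` and `v (n+1) = u n` is a rational binomial identity. For `m = 1`
the term `h_0` enters with the factor `m - 1 = 0`. Since `p ≠ 1` we have `β ≠ 0`, and solving the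
recurrence for `τ` gives the second claim.
-/

open Finset

section Binomial

variable {R : Type*} [CommRing R]

theorem cast_choose_succ_right_eq (n k : ℕ) :
    (n.choose (k + 1) : R) * (k + 1) = n.choose k * (n - k) := by
  rcases le_or_gt k n with hk | hk
  · have h := congrArg (Nat.cast : ℕ → R) (Nat.choose_succ_right_eq n k)
    push_cast [Nat.cast_sub hk] at h
    exact h
  · simp [Nat.choose_eq_zero_of_lt hk, Nat.choose_eq_zero_of_lt (Nat.lt_succ_of_lt hk)]

theorem cast_choose_mul_succ_eq (n k : ℕ) :
    (n.choose k : R) * (n + 1) = (n + 1).choose k * (n + 1 - k) := by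
  rcases le_or_gt k (n + 1) with hk | hk
  · have h := congrArg (Nat.cast : ℕ → R) (Nat.choose_mul_succ_eq n k)
    push_cast [Nat.cast_sub hk] at h
    exact h
  · simp [Nat.choose_eq_zero_of_lt hk, Nat.choose_eq_zero_of_lt (Nat.lt_of_succ_lt hk)]

theorem cast_mul_choose_pred (n k : ℕ) :
    (n : R) * (n - 1).choose k = n.choose k * (n - k) := by
  rcases n with _ | n
  · rcases k with _ | k <;> simp
  · simpa [mul_comm] using cast_choose_mul_succ_eq (R := R) n k

end Binomial

theorem sum_range_mul_pow_succ_eq_of_shift {R : Type*} [CommSemiring R] (u v : ℕ → R) (x : R)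
    (T : ℕ) (hv : v 0 = 0) (hu : u T = 0) (huv : ∀ i < T, v (i + 1) = u i) :
    ∑ n ∈ range (T + 1), u n * x ^ (n + 1) = ∑ n ∈ range (T + 1), v n * x ^ n := by
  rw [sum_range_succ, hu, sum_range_succ', hv, zero_mul, zero_mul, add_zero, add_zero]
  exact sum_congr rfl fun i hi => by rw [huv i (mem_range.mp hi)]

section LaguerreSum

variable {K : Type*} [Field K] [CharZero K]

/-- `delayLaguerrePoly p τ m = (-√p) ^ (m - τ) * laguerreSum τ m (-p)`. -/
def laguerreSum (τ m : ℕ) (x : K) : K :=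
  ∑ n ∈ range τ, ((m + n).choose n : K) * ((m - 1).choose (τ - n - 1) : K) * x ^ n

theorem choose_mul_choose_shift (M i q : ℕ) :
    ((i : K) + q + 2 - (M + 1)) * (M + i + 2).choose (i + 1) * M.choose q
        + M * (M + i + 1).choose (i + 1) * (M - 1).choose q
      = (M + 2) * (M + i + 2).choose i * (M + 1).choose (q + 1)
        - (M + 1 + (i + q + 2)) * (M + i + 1).choose i * M.choose (q + 1) := by
  set a : K := ((M + i + 1).choose i : K)
  set b : K := (M.choose q : K)
  have hA1 : ((M + i + 1).choose (i + 1) : K) * (i + 1) = a * (M + 1) := by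
    have := cast_choose_succ_right_eq (R := K) (M + i + 1) i
    push_cast at this
    linear_combination this
  have hA2 : ((M + i + 2).choose (i + 1) : K) = a + (M + i + 1).choose (i + 1) := by
    rw [Nat.choose_succ_succ]; push_cast; ring
  have hA3 : a * (M + i + 2) = (M + i + 2).choose i * (M + 2) := by
    have := cast_choose_mul_succ_eq (R := K) (M + i + 1) i
    push_cast at this
    linear_combination this
  have hB1 := cast_choose_succ_right_eq (R := K) M q
  have hB2 : ((M + 1).choose (q + 1) : K) = b + M.choose (q + 1) := by
    rw [Nat.choose_succ_succ]; push_cast; ring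
  have hBm := cast_mul_choose_pred (R := K) M q
  trans (i + q + 2) * a * b
  · refine mul_left_cancel₀ (Nat.cast_add_one_ne_zero i) ?_
    rw [hA2]
    linear_combination
      ((i : K) + 1) * b * hA1 + ((i : K) + 1) * (M + i + 1).choose (i + 1) * hBm
  · rw [hB2]
    linear_combination (b + M.choose (q + 1)) * hA3 + a * hB1

theorem laguerreSum_recurrence (τ M : ℕ) (x : K) :
    (M + 2) * x * laguerreSum τ (M + 2) x
        + ((M + 1) * (1 - x) - τ * (1 + x)) * laguerreSum τ (M + 1) x - M * laguerreSum τ M x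
      = 0 := by
  rcases τ with _ | T
  · simp [laguerreSum]
  let c (m n : ℕ) : K := ((m + n).choose n : K) * ((m - 1).choose (T + 1 - n - 1) : K)
  let u (n : ℕ) : K := (M + 2) * c (M + 2) n - (M + 1 + (T + 1)) * c (M + 1) n
  let v (n : ℕ) : K := ((T : K) + 1 - (M + 1)) * c (M + 1) n + M * c M n
  have hsplit : (M + 2) * x * laguerreSum (T + 1) (M + 2) x
        + ((M + 1) * (1 - x) - ((T + 1 : ℕ) : K) * (1 + x)) * laguerreSum (T + 1) (M + 1) x
        - M * laguerreSum (T + 1) M x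
      = ∑ n ∈ range (T + 1), (u n * x ^ (n + 1) - v n * x ^ n) := by
    simp only [laguerreSum, mul_sum, ← sum_sub_distrib, ← sum_add_distrib]
    refine sum_congr rfl fun n _ => ?_
    simp only [u, v, c, Nat.add_sub_cancel]
    push_cast
    ring
  rw [hsplit, sum_sub_distrib, sum_range_mul_pow_succ_eq_of_shift u v x T ?_ ?_ ?_, sub_self]
  · have := cast_mul_choose_pred (R := K) M T
    simp only [v, c, Nat.add_sub_cancel, add_zero, Nat.choose_zero_right, Nat.sub_zero]
    push_cast
    linear_combination this
  · have := cast_choose_mul_succ_eq (R := K) (M + T + 1) T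
    simp only [u, c, Nat.add_sub_cancel, show T + 1 - T - 1 = 0 by omega, Nat.choose_zero_right]
    push_cast at this ⊢
    rw [show M + 2 + T = M + T + 1 + 1 by ring, show M + 1 + T = M + T + 1 by ring]
    linear_combination -this
  · intro i hi
    obtain ⟨q, rfl⟩ : ∃ q, T = i + 1 + q := ⟨T - i - 1, by omega⟩
    have := choose_mul_choose_shift (K := K) M i q
    simp only [u, v, c, Nat.add_sub_cancel]
    rw [show i + 1 + q + 1 - (i + 1) - 1 = q by omega, show i + 1 + q + 1 - i - 1 = q + 1 by omega,
      show M + 1 + (i + 1) = M + i + 2 by ring, show M + (i + 1) = M + i + 1 by ring,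
      show M + 2 + i = M + i + 2 by ring, show M + 1 + i = M + i + 1 by ring]
    push_cast at this ⊢
    linear_combination this

end LaguerreSum

theorem sqrt_sub_one_div_sqrt_ne_zero {p : ℝ} (hp : 0 < p) (hp1 : p ≠ 1) :
    Real.sqrt p - 1 / Real.sqrt p ≠ 0 := by
  have hs : Real.sqrt p ≠ 0 := (Real.sqrt_pos.2 hp).ne'
  rw [sub_ne_zero, ne_eq, eq_div_iff hs, Real.mul_self_sqrt hp.le]
  exact hp1

theorem delayLaguerrePoly_recurrence (p : ℝ) (hp : 0 < p) (τ M : ℕ) :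
    (M + 2) * delayLaguerrePoly p τ (M + 2)
        + ((M + 1) * (Real.sqrt p + 1 / Real.sqrt p) + τ * (Real.sqrt p - 1 / Real.sqrt p))
          * delayLaguerrePoly p τ (M + 1)
        + M * delayLaguerrePoly p τ M
      = 0 := by
  set s := Real.sqrt p
  have hs : s ≠ 0 := (Real.sqrt_pos.2 hp).ne'
  set E := (-s) ^ ((M : ℤ) - τ)
  have hL (k : ℕ) : delayLaguerrePoly p τ (M + k) = E * (-s) ^ k * laguerreSum τ (M + k) (-p) := by
    rw [delayLaguerrePoly, ← laguerreSum, Nat.cast_add, add_sub_right_comm,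
      zpow_add₀ (neg_ne_zero.2 hs), zpow_natCast]
  have hL0 : delayLaguerrePoly p τ M = E * laguerreSum τ M (-p) := by
    simpa using hL 0
  rw [hL 2, hL 1, hL0]
  have hsq : s ^ 2 = p := Real.sq_sqrt hp.le
  have hsa : (s + 1 / s) * s = p + 1 := by field_simp; rw [hsq]
  have hsb : (s - 1 / s) * s = p - 1 := by field_simp; rw [hsq]
  linear_combination -E * laguerreSum_recurrence τ M (-p)
    + E * (M + 2) * laguerreSum τ (M + 2) (-p) * hsq
    - E * (M + 1) * laguerreSum τ (M + 1) (-p) * hsa - E * τ * laguerreSum τ (M + 1) (-p) * hsb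

theorem delayMarkov_succ (p : ℝ) (τ m : ℕ) :
    delayMarkov p τ (m + 1) = (1 - p) * delayLaguerrePoly p τ (m + 1) :=
  if_neg m.succ_ne_zero

theorem natCast_mul_delayMarkov (p : ℝ) (τ m : ℕ) :
    (m : ℝ) * delayMarkov p τ m = (1 - p) * (m * delayLaguerrePoly p τ m) := by
  rcases m with _ | m
  · simp
  · rw [delayMarkov_succ]
    ring

theorem delay_markov_recurrence_general (p : ℝ) (hp0 : 0 < p) (hp1 : p < 1)
    (τ : ℕ) (α β : ℝ)
    (hα : α = Real.sqrt p + 1 / Real.sqrt p) (hβ : β = Real.sqrt p - 1 / Real.sqrt p) :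
    ∀ m : ℕ, 1 ≤ m →
      ((m : ℝ) + 1) * delayMarkov p τ (m + 1) +
          ((m : ℝ) * α + (τ : ℝ) * β) * delayMarkov p τ m +
          ((m : ℝ) - 1) * delayMarkov p τ (m - 1) = 0 ∧
      (delayMarkov p τ m ≠ 0 →
        (τ : ℝ) = -(((m : ℝ) + 1) * delayMarkov p τ (m + 1) +
              ((m : ℝ) - 1) * delayMarkov p τ (m - 1)) / (β * delayMarkov p τ m) -
            (m : ℝ) * α / β) := by
  intro m hm
  obtain ⟨M, rfl⟩ : ∃ M, m = M + 1 := ⟨m - 1, by omega⟩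
  have hrec : ((↑(M + 1) : ℝ) + 1) * delayMarkov p τ (M + 1 + 1) +
        ((↑(M + 1) : ℝ) * α + τ * β) * delayMarkov p τ (M + 1) +
        ((↑(M + 1) : ℝ) - 1) * delayMarkov p τ (M + 1 - 1) = 0 := by
    rw [delayMarkov_succ, delayMarkov_succ, Nat.add_sub_cancel, hα, hβ]
    push_cast
    linear_combination (1 - p) * delayLaguerrePoly_recurrence p hp0 τ M
      + natCast_mul_delayMarkov p τ M
  refine ⟨hrec, fun hne => ?_⟩
  have hβ0 : β ≠ 0 := hβ ▸ sqrt_sub_one_div_sqrt_ne_zero hp0 hp1.ne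
  field_simp
  linear_combination hrec

/-- Three-term recurrence of the delay Markov parameters and the resulting
closed-form expression of the delay `τ`. -/
theorem delay_markov_recurrence (p : ℝ) (hp0 : 0 < p) (hp1 : p < 1)
    (τ : ℕ) (hτ : 1 ≤ τ) (α β : ℝ)
    (hα : α = Real.sqrt p + 1 / Real.sqrt p) (hβ : β = Real.sqrt p - 1 / Real.sqrt p) :
    ∀ m : ℕ, 1 ≤ m →
      ((m : ℝ) + 1) * delayMarkov p τ (m + 1) +
          ((m : ℝ) * α + (τ : ℝ) * β) * delayMarkov p τ m +
          ((m : ℝ) - 1) * delayMarkov p τ (m - 1) = 0 ∧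
      (delayMarkov p τ m ≠ 0 →
        (τ : ℝ) = -(((m : ℝ) + 1) * delayMarkov p τ (m + 1) +
              ((m : ℝ) - 1) * delayMarkov p τ (m - 1)) / (β * delayMarkov p τ m) -
            (m : ℝ) * α / β) :=
  delay_markov_recurrence_general p hp0 hp1 τ α β hα hβ
end
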